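/- arXiv:2104.14347 — 2 statements merged into one kernel-verified Lean document; each statement's English description precedes it below -/
import Mathlib

section
/- Among all divisor methods, Jefferson's method (f(t) = t+1 for all t) is the only one satisfying weighted proportionality up to one item (WPROP1): a divisor method with function f produces a WPROP1 allocation for every instance (every number of agents and items, weights, and additive utilities) if and only if f(t) = t+1 for all t ∈ ℤ≥0. -/
/-!
Jefferson's method: fix an agent `i`, let `W` be the total weight and `β` the largest value to
`i` of an item she does not get. Before her `k`-th pick the other agents have picked at most
`k (W - w i) / w i` times, and an item they take after her `j`-th pick is worth at most
`min β v_j` to her, where `v_j` is the value of her `j`-th pick (she picked greedily). Summing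
by parts, the others' items are worth at most `(W - w i) / w i * (β + u_i(M_i))` to her, which
is WPROP1 with `B` the item of value `β`.

Any other divisor method fails on identical items: an agent `0` of weight `w₀` first picks `a`
times, then `N` clones of weight `1` pick `b` rounds each. If `f 0 < 1` take `b = 1` and `w₀`
large; if `f 0 = 1` and `f t < t + 1` take `a = 0` and `b = t + 1`. For large `N`, agent `0`
gets fewer than `w₀ / (w₀ + N) * (a + N b) - 1` items.
-/
open Finset

/-- The favorite item of an agent with item-utility function `u` among a remaining
set `R` of items: a highest-valued item, ties broken in favor of the lower-numbered item. -/
noncomputable def favorite {m : ℕ} (u : Fin m → ℝ) (R : Finset (Fin m)) : Option (Fin m) :=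
  if h : (R.filter fun j => ∀ j' ∈ R, u j' ≤ u j).Nonempty then
    some ((R.filter fun j => ∀ j' ∈ R, u j' ≤ u j).min' h)
  else none

/-- One step of the picking process: agent `a` picks her favorite remaining item. -/
noncomputable def pickStep {n m : ℕ} (u : Fin n → Fin m → ℝ)
    (st : Finset (Fin m) × (Fin n → Finset (Fin m))) (a : Fin n) :
    Finset (Fin m) × (Fin n → Finset (Fin m)) :=
  match favorite (u a) st.1 with
  | none => st
  | some j => (st.1.erase j, Function.update st.2 a (insert j (st.2 a)))

/-- The allocation produced by letting agents pick their favorite remaining items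
in the order given by the picking sequence `π`. -/
noncomputable def allocate {n m : ℕ} (u : Fin n → Fin m → ℝ) (π : List (Fin n)) :
    Fin n → Finset (Fin m) :=
  (π.foldl (pickStep u) (Finset.univ, fun _ => ∅)).2

/-- Weighted proportionality up to one item. -/
def isWPROP1 {n m : ℕ} (w : Fin n → ℝ) (u : Fin n → Fin m → ℝ)
    (M : Fin n → Finset (Fin m)) : Prop :=
  ∀ i : Fin n, ∃ B ⊆ Finset.univ \ M i, B.card ≤ 1 ∧
    w i / (∑ i', w i') * (∑ x, u i x) - (∑ x ∈ B, u i x) ≤ ∑ x ∈ M i, u i x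

/-- A divisor method is given by a strictly increasing `f : ℕ → ℝ` with `t ≤ f t ≤ t + 1`. -/
def IsDivisorFn (f : ℕ → ℝ) : Prop :=
  StrictMono f ∧ ∀ t : ℕ, (t : ℝ) ≤ f t ∧ f t ≤ t + 1

/-- `π` is the picking sequence induced by the divisor method with function `f` and
weights `w`: each pick goes to an agent minimizing `f t_i / w_i` (where `t_i` is the
number of picks agent `i` has received so far), ties broken toward lower-numbered agents. -/
def IsDivisorSeq {n : ℕ} (f : ℕ → ℝ) (w : Fin n → ℝ) (π : List (Fin n)) : Prop :=
  ∀ (k : ℕ) (hk : k < π.length) (i : Fin n),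
    f ((π.take k).count (π.get ⟨k, hk⟩)) / w (π.get ⟨k, hk⟩) ≤
      f ((π.take k).count i) / w i ∧
    (i < π.get ⟨k, hk⟩ →
      f ((π.take k).count (π.get ⟨k, hk⟩)) / w (π.get ⟨k, hk⟩) <
        f ((π.take k).count i) / w i)


namespace List

theorem count_map_range {α : Type*} [DecidableEq α] (s : ℕ → α) (k : ℕ) (x : α) :
    ((List.range k).map s).count x = #{q ∈ Finset.range k | s q = x} := by
  induction k with
  | zero => simp
  | succ k ih =>
    rw [List.range_succ, List.map_append, List.count_append, ih, Finset.range_add_one,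
      filter_insert]
    split_ifs with h <;> simp [h]

theorem map_getD_range {α : Type*} (l : List α) (d : α) :
    (List.range l.length).map (l.getD · d) = l := by
  apply List.ext_getElem (by simp)
  intro q hq _
  simp [List.getD_eq_getElem?_getD, List.getElem?_eq_getElem (by simpa using hq)]

theorem count_take_eq_card_filter {α : Type*} [DecidableEq α] (l : List α) (d : α) {k : ℕ}
    (hk : k ≤ l.length) (x : α) :
    (l.take k).count x = #{q ∈ Finset.range k | l.getD q d = x} := by
  conv_lhs => rw [← l.map_getD_range d, ← List.map_take, List.take_range, min_eq_left hk]
  exact count_map_range _ k x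

end List

section Picking

variable {n m : ℕ} (u : Fin n → Fin m → ℝ) (π : List (Fin n))

theorem exists_favorite (v : Fin m → ℝ) {R : Finset (Fin m)} (hR : R.Nonempty) :
    ∃ x ∈ R, favorite v R = some x ∧ ∀ y ∈ R, v y ≤ v x := by
  obtain ⟨x₀, hx₀, hmax⟩ := R.exists_max_image v hR
  have hne : (R.filter fun j => ∀ j' ∈ R, v j' ≤ v j).Nonempty := ⟨x₀, mem_filter.2 ⟨hx₀, hmax⟩⟩
  obtain ⟨hmem, hle⟩ := mem_filter.1 (min'_mem _ hne)
  exact ⟨_, hmem, by simp [favorite, hne], hle⟩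

noncomputable def pickState (k : ℕ) : Finset (Fin m) × (Fin n → Finset (Fin m)) :=
  (π.take k).foldl (pickStep u) (univ, fun _ => ∅)

-- The defaults `d` and `0` only matter at turns `q ≥ π.length`.
noncomputable def pickedItem [NeZero m] (d : Fin n) (q : ℕ) : Fin m :=
  (favorite (u (π.getD q d)) (pickState u π q).1).getD 0

theorem pickState_succ {k : ℕ} (hk : k < π.length) (d : Fin n) :
    pickState u π (k + 1) = pickStep u (pickState u π k) (π.getD k d) := by
  rw [pickState, pickState, List.take_add_one, List.foldl_append, List.getElem?_eq_getElem hk,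
    List.getD_eq_getElem?_getD, List.getElem?_eq_getElem hk]
  rfl

theorem allocate_eq_pickState (hlen : π.length = m) :
    allocate u π = (pickState u π m).2 := by
  simp [allocate, pickState, ← hlen]

theorem pickState_spec [NeZero m] (hlen : π.length = m) (d : Fin n) {k : ℕ} (hk : k ≤ m) :
    Set.InjOn (pickedItem u π d) (range k) ∧
      (pickState u π k).1 = univ \ (range k).image (pickedItem u π d) ∧
      ∀ i, (pickState u π k).2 i = {q ∈ range k | π.getD q d = i}.image (pickedItem u π d) := by
  induction k with
  | zero => simp [pickState]
  | succ k ih =>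
    obtain ⟨hinj, hR, hM⟩ := ih (by omega)
    have hRne : (pickState u π k).1.Nonempty := by
      rw [← card_pos, hR, card_sdiff_of_subset (subset_univ _), card_univ, Fintype.card_fin,
        card_image_of_injOn hinj, card_range]
      omega
    obtain ⟨x, hxR, hfav, -⟩ := exists_favorite (u (π.getD k d)) hRne
    have hx : pickedItem u π d k = x := by rw [pickedItem, hfav]; rfl
    have hxk : x ∉ (range k).image (pickedItem u π d) := by
      rw [hR] at hxR; exact (mem_sdiff.1 hxR).2
    rw [pickState_succ u π (by omega) d]
    simp only [pickStep, hfav, range_add_one, coe_insert, image_insert, hx, sdiff_insert, ← hR]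
    refine ⟨Set.injOn_insert (by simp) |>.2 ⟨hinj, by simpa [hx] using hxk⟩, trivial, fun i => ?_⟩
    rw [filter_insert]
    by_cases hi : π.getD k d = i
    · subst hi; rw [Function.update_self, if_pos rfl, image_insert, hx, hM]
    · rw [Function.update_of_ne (Ne.symm hi), if_neg hi, hM]

theorem injOn_pickedItem [NeZero m] (hlen : π.length = m) (d : Fin n) :
    Set.InjOn (pickedItem u π d) (range m) :=
  (pickState_spec u π hlen d le_rfl).1

theorem allocate_eq_image [NeZero m] (hlen : π.length = m) (d : Fin n) (i : Fin n) :
    allocate u π i = {q ∈ range m | π.getD q d = i}.image (pickedItem u π d) := by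
  rw [allocate_eq_pickState u π hlen, (pickState_spec u π hlen d le_rfl).2.2]

theorem image_pickedItem_range [NeZero m] (hlen : π.length = m) (d : Fin n) :
    (range m).image (pickedItem u π d) = univ :=
  eq_univ_of_card _ (by rw [card_image_of_injOn (injOn_pickedItem u π hlen d)]; simp)

theorem pickedItem_le [NeZero m] (hlen : π.length = m) (d : Fin n) {p q : ℕ} (hpq : p ≤ q)
    (hq : q < m) :
    u (π.getD p d) (pickedItem u π d q) ≤ u (π.getD p d) (pickedItem u π d p) := by
  obtain ⟨-, hR, -⟩ := pickState_spec u π hlen d (k := p) (by omega)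
  have hqR : pickedItem u π d q ∈ (pickState u π p).1 := by
    rw [hR, mem_sdiff]
    refine ⟨mem_univ _, fun hmem => ?_⟩
    obtain ⟨r, hr, hrq⟩ := mem_image.1 hmem
    have hrp := mem_range.1 hr
    have := injOn_pickedItem u π hlen d (by simp; omega) (by simpa using hq) hrq
    omega
  obtain ⟨x, -, hfav, hmax⟩ := exists_favorite (u (π.getD p d)) ⟨_, hqR⟩
  have hx : pickedItem u π d p = x := by rw [pickedItem, hfav]; rfl
  exact hx ▸ hmax _ hqR

theorem card_allocate (hlen : π.length = m) (i : Fin n) : #(allocate u π i) = π.count i := by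
  rcases Nat.eq_zero_or_pos m with rfl | hm
  · simp [List.length_eq_zero_iff.1 hlen, allocate]
  have : NeZero m := ⟨hm.ne'⟩
  rw [allocate_eq_image u π hlen i, card_image_of_injOn ((injOn_pickedItem u π hlen i).mono
    (coe_subset.2 (filter_subset _ _))), ← List.count_take_eq_card_filter π i hlen.ge, ← hlen,
    List.take_length]

end Picking

section Potential

variable (own : ℕ → Prop) [DecidablePred own] (val : ℕ → ℝ) {c : ℝ}

/- The factor of `D m` is the number of turns outside `own` that `hcount` still allows before
the next `own` turn; each of them is worth at most `D m`. -/
theorem sum_filter_not_add_mul_le (D : ℕ → ℝ) {m : ℕ} (hc : 0 ≤ c)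
    (hD : ∀ q < m, D (q + 1) ≤ D q)
    (hother : ∀ q < m, ¬ own q → val q ≤ D q)
    (hown : ∀ q < m, own q → D (q + 1) ≤ val q)
    (hcount : ∀ k ≤ m, (#{q ∈ range k | ¬ own q} : ℝ) ≤ (#{q ∈ range k | own q} + 1) * c) :
    ∑ q ∈ range m with ¬ own q, val q +
        ((#{q ∈ range m | own q} + 1) * c - #{q ∈ range m | ¬ own q}) * D m ≤
      c * (D 0 + ∑ q ∈ range m with own q, val q) := by
  induction m with
  | zero => simp
  | succ m ih =>
    have ih := ih (fun q hq => hD q (by omega)) (fun q hq => hother q (by omega))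
      (fun q hq => hown q (by omega)) (fun k hk => hcount k (by omega))
    have hslack := hcount m (by omega)
    have hslack' := hcount (m + 1) le_rfl
    have hDm := hD m (by omega)
    simp only [range_add_one, filter_insert] at hslack' ⊢
    by_cases h : own m
    · simp only [h, not_true_eq_false, if_true, if_false] at hslack' ⊢
      rw [card_insert_of_notMem (by simp)] at hslack'
      rw [sum_insert (by simp), card_insert_of_notMem (by simp)]
      push_cast at hslack' ⊢
      linarith [mul_nonneg (sub_nonneg.2 hslack) (sub_nonneg.2 hDm),
        mul_le_mul_of_nonneg_left (hown m (by omega) h) hc]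
    · simp only [h, not_false_eq_true, if_true, if_false] at hslack' ⊢
      rw [card_insert_of_notMem (by simp)] at hslack'
      rw [sum_insert (by simp), card_insert_of_notMem (by simp)]
      push_cast at hslack' ⊢
      linarith [mul_nonneg (sub_nonneg.2 hslack') (sub_nonneg.2 hDm), hother m (by omega) h]

theorem sum_filter_not_le_of_greedy {β : ℝ} {m : ℕ} (hc : 0 ≤ c) (hβ : 0 ≤ β)
    (hval : ∀ q < m, own q → 0 ≤ val q)
    (hother : ∀ q < m, ¬ own q → val q ≤ β)
    (hgreedy : ∀ p q, p < q → q < m → own p → val q ≤ val p)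
    (hcount : ∀ k ≤ m, (#{q ∈ range k | ¬ own q} : ℝ) ≤ (#{q ∈ range k | own q} + 1) * c) :
    ∑ q ∈ range m with ¬ own q, val q ≤ c * (β + ∑ q ∈ range m with own q, val q) := by
  set D : ℕ → ℝ := fun k => (insert β ({q ∈ range k | own q}.image val)).min' (insert_nonempty _ _)
  have hD0 : D 0 = β := by simp [D]
  have hDm : 0 ≤ D m := by
    refine le_min' _ _ _ fun x hx => ?_
    obtain rfl | hx := mem_insert.1 hx
    · exact hβ
    · obtain ⟨q, hq, rfl⟩ := mem_image.1 hx
      simp only [mem_filter, mem_range] at hq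
      exact hval q hq.1 hq.2
  have key := sum_filter_not_add_mul_le own val D hc
    (fun q _ => min'_subset _ (insert_subset_insert _ (image_subset_image
      (filter_subset_filter _ (range_subset_range.2 (Nat.le_succ q))))))
    (fun q hq hq' => le_min' _ _ _ fun x hx => by
      obtain rfl | hx := mem_insert.1 hx
      · exact hother q hq hq'
      · obtain ⟨p, hp, rfl⟩ := mem_image.1 hx
        simp only [mem_filter, mem_range] at hp
        exact hgreedy p q hp.1 hq hp.2)
    (fun q _ hq => min'_le _ _ (mem_insert_of_mem (mem_image_of_mem _ (by simp [hq]))))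
    hcount
  rw [hD0] at key
  linarith [mul_nonneg (sub_nonneg.2 (hcount m le_rfl)) hDm]

end Potential

theorem exists_subset_card_le_one_forall_le_sum {α M : Type*} [AddCommMonoid M] [LinearOrder M]
    (s : Finset α) (f : α → M) : ∃ B ⊆ s, #B ≤ 1 ∧ ∀ x ∈ s, f x ≤ ∑ y ∈ B, f y := by
  rcases s.eq_empty_or_nonempty with rfl | hs
  · exact ⟨∅, by simp⟩
  · obtain ⟨x, hx, hmax⟩ := s.exists_max_image f hs
    exact ⟨{x}, by simpa using hx, by simp, by simpa using hmax⟩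

section Jefferson

variable {n : ℕ} {w : Fin n → ℝ} {π : List (Fin n)}

theorem count_take_div_le_of_jefferson (hw : ∀ i, 0 < w i)
    (hseq : IsDivisorSeq (fun t => (t : ℝ) + 1) w π) (i j : Fin n) (k : ℕ) :
    ((π.take k).count j : ℝ) / w j ≤ ((π.take k).count i + 1) / w i := by
  induction k with
  | zero => simpa using (hw i).le
  | succ k ih =>
    rcases lt_or_ge k π.length with hk | hk
    · have hpick := (hseq k hk i).1
      simp only [List.get_eq_getElem] at hpick
      rw [List.take_add_one, List.getElem?_eq_getElem hk]
      simp only [Option.toList_some, List.count_append, List.count_singleton, beq_iff_eq]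
      have hmono : ((π.take k).count i + 1) / w i ≤
          ((π.take k).count i + (if π[k] = i then 1 else 0 : ℕ) + 1) / w i := by
        gcongr
        · exact (hw i).le
        · exact le_add_of_nonneg_right (Nat.cast_nonneg _)
      rcases eq_or_ne π[k] j with rfl | hj
      · push_cast at hpick ⊢
        simpa using hpick.trans hmono
      · simpa [hj] using ih.trans hmono
    · rwa [List.take_of_length_le (by omega), ← List.take_of_length_le (l := π) hk]

theorem card_filter_ne_le_of_jefferson (hw : ∀ i, 0 < w i)
    (hseq : IsDivisorSeq (fun t => (t : ℝ) + 1) w π) (i : Fin n) {k : ℕ} (hk : k ≤ π.length) :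
    (#{q ∈ range k | π.getD q i ≠ i} : ℝ) ≤
      (#{q ∈ range k | π.getD q i = i} + 1) * ((∑ j, w j - w i) / w i) := by
  rw [← List.count_take_eq_card_filter π i hk, card_eq_sum_card_fiberwise (f := (π.getD · i))
    (t := univ.erase i) fun q hq => by simpa using (mem_filter.1 hq).2]
  push_cast
  calc ∑ j ∈ univ.erase i, (#{q ∈ {q ∈ range k | π.getD q i ≠ i} | π.getD q i = j} : ℝ)
      = ∑ j ∈ univ.erase i, ((π.take k).count j : ℝ) := by
        refine sum_congr rfl fun j hj => ?_
        rw [List.count_take_eq_card_filter π i hk, filter_filter]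
        congr 2
        exact filter_congr fun q _ => ⟨And.right, fun h => ⟨h ▸ (mem_erase.1 hj).1, h⟩⟩
    _ ≤ ∑ j ∈ univ.erase i, w j * (((π.take k).count i + 1) / w i) :=
        sum_le_sum fun j _ => (div_le_iff₀' (hw j)).1 (count_take_div_le_of_jefferson hw hseq i j k)
    _ = ((π.take k).count i + 1) * ((∑ j, w j - w i) / w i) := by
        rw [← sum_mul, sum_erase_eq_sub (mem_univ i)]
        ring

theorem isWPROP1_of_jefferson {m : ℕ} (hw : ∀ i, 0 < w i) (hlen : π.length = m)
    (hseq : IsDivisorSeq (fun t => (t : ℝ) + 1) w π) (u : Fin n → Fin m → ℝ)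
    (hu : ∀ i j, 0 ≤ u i j) : isWPROP1 w u (allocate u π) := by
  intro i
  rcases Nat.eq_zero_or_pos m with rfl | hm
  · exact ⟨∅, by simp [eq_empty_of_isEmpty (allocate u π i)]⟩
  have : NeZero m := ⟨hm.ne'⟩
  obtain ⟨B, hBsub, hBcard, hB⟩ :=
    exists_subset_card_le_one_forall_le_sum (univ \ allocate u π i) (u i)
  refine ⟨B, hBsub, hBcard, ?_⟩
  set g := pickedItem u π i
  have hinj : Set.InjOn g (range m) := injOn_pickedItem u π hlen i
  have hW : w i ≤ ∑ j, w j := single_le_sum (fun j _ => (hw j).le) (mem_univ i)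
  have hβ : 0 ≤ ∑ x ∈ B, u i x := sum_nonneg fun x _ => hu i x
  have hS : ∑ x ∈ allocate u π i, u i x = ∑ q ∈ range m with π.getD q i = i, u i (g q) := by
    rw [allocate_eq_image u π hlen i, sum_image (hinj.mono (coe_subset.2 (filter_subset _ _)))]
  have htotal : ∑ x, u i x = ∑ q ∈ range m with π.getD q i = i, u i (g q) +
      ∑ q ∈ range m with ¬π.getD q i = i, u i (g q) := by
    rw [← image_pickedItem_range u π hlen i, sum_image hinj, sum_filter_add_sum_filter_not]
  have hother : ∀ q < m, ¬π.getD q i = i → u i (g q) ≤ ∑ x ∈ B, u i x := by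
    refine fun q hq hqi => hB _ (mem_sdiff.2 ⟨mem_univ _, fun hmem => hqi ?_⟩)
    obtain ⟨r, hr, hrq⟩ := mem_image.1 (allocate_eq_image u π hlen i i ▸ hmem)
    obtain ⟨hrm, hri⟩ := mem_filter.1 hr
    rwa [← hinj (by simpa using hrm) (by simpa using hq) hrq]
  have hO := sum_filter_not_le_of_greedy (fun q => π.getD q i = i) (fun q => u i (g q))
    (div_nonneg (sub_nonneg.2 hW) (hw i).le) hβ (fun q _ _ => hu _ _) hother
    (fun p q hpq hq hp => hp ▸ pickedItem_le u π hlen i hpq.le hq)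
    (fun k hk => card_filter_ne_le_of_jefferson hw hseq i (hlen ▸ hk))
  rw [hS, htotal, div_mul_eq_mul_div, sub_le_iff_le_add, div_le_iff₀ ((hw i).trans_le hW)]
  rw [div_mul_eq_mul_div, le_div_iff₀ (hw i)] at hO
  linarith [mul_nonneg (hw i).le hβ]

end Jefferson

def cloneSeq (a N b : ℕ) [NeZero N] : List (Fin (N + 1)) :=
  List.replicate a 0 ++ (List.range (N * b)).map fun j => (Fin.ofNat N j).succ

theorem count_map_ofNat_range (N : ℕ) [NeZero N] (j : ℕ) (c : Fin N) :
    ((List.range j).map (Fin.ofNat N)).count c = j / N + if (c : ℕ) < j % N then 1 else 0 := by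
  have h := Nat.count_modEq_card j (Nat.pos_of_neZero N) c
  rw [Nat.count_eq_card_filter_range, Nat.mod_eq_of_lt c.isLt] at h
  rw [List.count_map_range, ← h]
  congr 1
  exact filter_congr fun q _ => by simp [Fin.ext_iff, Nat.ModEq, Nat.mod_eq_of_lt c.isLt]

theorem length_cloneSeq (a N b : ℕ) [NeZero N] : (cloneSeq a N b).length = a + N * b := by
  simp [cloneSeq]

theorem count_zero_cloneSeq (a N b : ℕ) [NeZero N] : (cloneSeq a N b).count 0 = a := by
  simp [cloneSeq, List.count_eq_zero, Fin.succ_ne_zero]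

theorem isDivisorSeq_cloneSeq {f : ℕ → ℝ} (hf : StrictMono f) {a N b : ℕ} [NeZero N] {w₀ : ℝ}
    (hw₀ : 0 < w₀) (hpre : ∀ k < a, f k ≤ w₀ * f 0) (hpost : w₀ * f (b - 1) < f a) :
    IsDivisorSeq f (Fin.cons w₀ fun _ => 1) (cloneSeq a N b) := by
  intro k hk i
  simp only [List.get_eq_getElem]
  rcases lt_or_ge k a with hka | hka
  · have htake : (cloneSeq a N b).take k = List.replicate k 0 := by
      simp [cloneSeq, List.take_append, hka.le, Nat.sub_eq_zero_of_le hka.le]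
    have hget : (cloneSeq a N b)[k] = 0 := by
      simp [cloneSeq, List.getElem_append_left, hka]
    rw [htake, hget]
    refine Fin.cases (by simp) (fun c => ?_) i
    have hc : (List.replicate k 0).count c.succ = 0 :=
      List.count_eq_zero.2 (by simp [Fin.succ_ne_zero])
    rw [hc, List.count_replicate_self, Fin.cons_zero, Fin.cons_succ, div_one, div_le_iff₀ hw₀]
    exact ⟨by linarith [hpre k hka], fun h => absurd h (Fin.not_lt_zero _)⟩
  · obtain ⟨j, rfl⟩ : ∃ j, k = a + j := ⟨k - a, by omega⟩
    have hjb : j < N * b := by rw [length_cloneSeq] at hk; omega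
    have hj : j / N < b := Nat.div_lt_of_lt_mul hjb
    have htake : (cloneSeq a N b).take (a + j) =
        List.replicate a 0 ++ ((List.range j).map (Fin.ofNat N)).map Fin.succ := by
      simp [cloneSeq, List.take_append, ← List.map_take, List.take_range, hjb.le, Function.comp_def]
    have hget : (cloneSeq a N b)[a + j] = (Fin.ofNat N j).succ := by
      simp [cloneSeq, List.getElem_append_right]
    have hcount (c : Fin N) : ((cloneSeq a N b).take (a + j)).count c.succ =
        j / N + if (c : ℕ) < j % N then 1 else 0 := by
      rw [htake, List.count_append, List.count_eq_zero.2 (by simp [Fin.succ_ne_zero]),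
        List.count_map_of_injective _ _ (Fin.succ_injective N), count_map_ofNat_range, zero_add]
    rw [hget, hcount]
    simp only [Fin.val_ofNat, lt_irrefl, if_false, add_zero, Fin.cons_succ, div_one]
    refine Fin.cases ?_ (fun c => ?_) i
    · have hcount0 : ((cloneSeq a N b).take (a + j)).count 0 = a := by
        rw [htake, List.count_append, List.count_replicate_self, add_eq_left,
          List.count_eq_zero]
        simp [Fin.succ_ne_zero]
      have hlt : f (j / N) < f a / w₀ := by
        rw [lt_div_iff₀ hw₀, mul_comm]
        exact (mul_le_mul_of_nonneg_left (hf.monotone (by omega)) hw₀.le).trans_lt hpost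
      simp only [hcount0, Fin.cons_zero]
      exact ⟨hlt.le, fun _ => hlt⟩
    · rw [hcount, Fin.cons_succ, div_one]
      split_ifs with hc
      · exact ⟨(hf (by omega)).le, fun _ => hf (by omega)⟩
      · refine ⟨le_rfl, fun hlt => absurd ?_ hc⟩
        simpa [Fin.lt_def] using hlt

theorem exists_not_isWPROP1_of_clones {f : ℕ → ℝ} (hf : StrictMono f) {a b : ℕ} {w₀ : ℝ}
    (hw₀ : 0 < w₀) (hpre : ∀ k < a, f k ≤ w₀ * f 0) (hpost : w₀ * f (b - 1) < f a)
    (hgap : a + 1 < w₀ * b) :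
    ∃ (n m : ℕ) (w : Fin n → ℝ), (∀ i, 0 < w i) ∧ ∃ π : List (Fin n), π.length = m ∧
      IsDivisorSeq f w π ∧ ∃ u : Fin n → Fin m → ℝ, (∀ i j, 0 ≤ u i j) ∧
        ¬ isWPROP1 w u (allocate u π) := by
  obtain ⟨N, hN⟩ := exists_nat_gt (w₀ / (w₀ * b - (a + 1)))
  rw [div_lt_iff₀ (by linarith)] at hN
  have : NeZero N := ⟨by rintro rfl; simp at hN; linarith⟩
  refine ⟨N + 1, a + N * b, Fin.cons w₀ fun _ => 1, Fin.cases hw₀ fun _ => one_pos,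
    cloneSeq a N b, length_cloneSeq a N b, isDivisorSeq_cloneSeq hf hw₀ hpre hpost,
    fun _ _ => 1, fun _ _ => zero_le_one, fun h => ?_⟩
  obtain ⟨B, -, hB, hineq⟩ := h 0
  simp only [sum_const, card_allocate _ _ (length_cloneSeq a N b), count_zero_cloneSeq,
    card_univ, Fintype.card_fin, Fin.sum_cons, Fin.cons_zero, nsmul_eq_mul, mul_one] at hineq
  have hB' : (#B : ℝ) ≤ 1 := by exact_mod_cast hB
  rw [div_mul_eq_mul_div, sub_le_iff_le_add, div_le_iff₀ (by positivity)] at hineq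
  push_cast at hineq
  linarith [mul_le_mul_of_nonneg_right hB' (by positivity : (0 : ℝ) ≤ w₀ + N)]

theorem exists_clone_params {f : ℕ → ℝ} (hf : IsDivisorFn f) {t : ℕ} (ht : f t ≠ t + 1) :
    ∃ (a b : ℕ) (w₀ : ℝ), 0 < w₀ ∧ (∀ k < a, f k ≤ w₀ * f 0) ∧ w₀ * f (b - 1) < f a ∧
      (a + 1 : ℝ) < w₀ * b := by
  obtain ⟨hmono, hbound⟩ := hf
  have hf0 : 0 ≤ f 0 := by simpa using (hbound 0).1
  rcases (show f 0 ≤ 1 by simpa using (hbound 0).2).lt_or_eq with h0 | h0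
  · set w₀ := 3 / (1 - f 0) with hw₀
    have hw₀pos : 0 < w₀ := div_pos three_pos (by linarith)
    have hw₀f : w₀ - w₀ * f 0 = 3 := by rw [hw₀]; field_simp
    have hwit : w₀ * f 0 < f (⌊w₀ * f 0⌋₊ + 1) :=
      (Nat.lt_floor_add_one _).trans_le (by exact_mod_cast (hbound _).1)
    have hex : ∃ t, w₀ * f 0 < f t := ⟨_, hwit⟩
    have ha : (Nat.find hex : ℝ) ≤ w₀ * f 0 + 1 := by
      have hle : Nat.find hex ≤ ⌊w₀ * f 0⌋₊ + 1 := Nat.find_min' hex hwit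
      calc (Nat.find hex : ℝ) ≤ ⌊w₀ * f 0⌋₊ + 1 := by exact_mod_cast hle
        _ ≤ w₀ * f 0 + 1 := by linarith [Nat.floor_le (mul_nonneg hw₀pos.le hf0)]
    refine ⟨Nat.find hex, 1, w₀, hw₀pos, fun k hk => not_lt.1 (Nat.find_min hex hk),
      by simpa using Nat.find_spec hex, ?_⟩
    push_cast
    linarith
  · have ht' : f t < t + 1 := (hbound t).2.lt_of_ne ht
    have hft : (t : ℝ) ≤ f t := (hbound t).1
    have hpos : 0 < f t + t + 1 := by linarith [t.cast_nonneg (α := ℝ)]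
    refine ⟨0, t + 1, 2 / (f t + t + 1), div_pos two_pos hpos, by simp, ?_, ?_⟩
    · rw [h0, Nat.add_sub_cancel, div_mul_eq_mul_div, div_lt_one hpos]
      linarith
    · rw [div_mul_eq_mul_div, lt_div_iff₀ hpos]
      push_cast
      linarith

theorem eq_jefferson_of_forall_isWPROP1 {f : ℕ → ℝ} (hf : IsDivisorFn f)
    (H : ∀ (n m : ℕ) (w : Fin n → ℝ), (∀ i, 0 < w i) →
      ∀ π : List (Fin n), π.length = m → IsDivisorSeq f w π →
      ∀ u : Fin n → Fin m → ℝ, (∀ i j, 0 ≤ u i j) → isWPROP1 w u (allocate u π))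
    (t : ℕ) : f t = t + 1 := by
  by_contra ht
  obtain ⟨a, b, w₀, hw₀, hpre, hpost, hgap⟩ := exists_clone_params hf ht
  obtain ⟨n, m, w, hw, π, hlen, hseq, u, hu, hnot⟩ :=
    exists_not_isWPROP1_of_clones hf.1 hw₀ hpre hpost hgap
  exact hnot (H n m w hw π hlen hseq u hu)

/-- Among all divisor methods, Jefferson's method (`f t = t + 1`) is
the only one satisfying WPROP1: a divisor method with function `f` produces a WPROP1
allocation for every instance if and only if `f t = t + 1` for all `t`. -/
theorem jefferson_unique_WPROP1 (f : ℕ → ℝ) (hf : IsDivisorFn f) :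
    (∀ (n m : ℕ) (w : Fin n → ℝ), (∀ i, 0 < w i) →
      ∀ π : List (Fin n), π.length = m → IsDivisorSeq f w π →
      ∀ u : Fin n → Fin m → ℝ, (∀ i j, 0 ≤ u i j) →
        isWPROP1 w u (allocate u π)) ↔
      ∀ t : ℕ, f t = t + 1 := by
  refine ⟨eq_jefferson_of_forall_isWPROP1 hf, fun hJ n m w hw π hlen hseq u hu => ?_⟩
  rw [funext hJ] at hseq
  exact isWPROP1_of_jefferson hw hlen hseq u hu
end

section
/- When there are two agents, the quota method satisfies weight-consistency and weight-monotonicity: for any number of items m, any weights (w_1, w_2), and any w_1' > w_1, the quota picking sequence for weights (w_1', w_2) can be obtained from the quota picking sequence for weights (w_1, w_2) by moving some of agent 1's picks earlier, inserting occurrences of agent 1 in some positions, and trimming the suffix of the resulting sequence so that it has length m; consequently, for any additive utilities, agent 1's utility from the allocation produced by the quota method does not decrease when her weight increases. -/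
open Finset

/-- `π` is the picking sequence induced by the quota method with weights `w`:
in round `k+1` (0-indexed position `k`), among the eligible agents
(those with `t_i < w_i·(k+1)/Σ w`), the pick goes to an agent minimizing
`(t_i + 1)/w_i`, ties broken toward lower-numbered agents. -/
def IsQuotaSeq {n : ℕ} (w : Fin n → ℝ) (π : List (Fin n)) : Prop :=
  ∀ (k : ℕ) (hk : k < π.length),
    (((π.take k).count (π.get ⟨k, hk⟩) : ℝ) <
        w (π.get ⟨k, hk⟩) * (k + 1) / ∑ i', w i') ∧
    ∀ i : Fin n, ((π.take k).count i : ℝ) < w i * (k + 1) / ∑ i', w i' →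
      (((π.take k).count (π.get ⟨k, hk⟩) : ℝ) + 1) / w (π.get ⟨k, hk⟩) ≤
          (((π.take k).count i : ℝ) + 1) / w i ∧
      (i < π.get ⟨k, hk⟩ →
        (((π.take k).count (π.get ⟨k, hk⟩) : ℝ) + 1) / w (π.get ⟨k, hk⟩) <
          (((π.take k).count i : ℝ) + 1) / w i)


/-
Raising `w 0` raises agent `0`'s quota and lowers agent `1`'s. So if before round `k` both
sequences have given agent `0` the same number of picks and the old sequence gives round `k` to
agent `0`, the new one does too; by induction every prefix of the new sequence has at least as
many picks of agent `0`.

For the utilities, the key fact is that turning an adjacent pair `1, 0` of a picking sequence into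
`0, 1` does not decrease agent `0`'s value. After the two pairs the runs are coupled: their pools
are equal, or arise from a common pool `T` by removing agent `0`'s favorite in `T` from the first
and agent `1`'s favorite in `T` from the second, and agent `0`'s value in the second run is at
least that in the first; every further pick preserves this coupling. A sequence dominating another
prefix-wise is then reached by repeatedly moving the first pick of agent `0` to the front and
stripping a common first entry.
-/

section Favorite

variable {m : ℕ}

def Dominates (v : Fin m → ℝ) (j : Fin m) (T : Finset (Fin m)) : Prop :=
  ∀ r ∈ T, v r ≤ v j ∧ (v r = v j → j ≤ r)

theorem Dominates.mono {v : Fin m → ℝ} {j : Fin m} {T T' : Finset (Fin m)}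
    (hd : Dominates v j T) (h : T' ⊆ T) : Dominates v j T' :=
  fun r hr => hd r (h hr)

theorem favorite_eq_some_iff {v : Fin m → ℝ} {R : Finset (Fin m)} {j : Fin m} :
    favorite v R = some j ↔ j ∈ R ∧ Dominates v j R := by
  set F := R.filter fun j => ∀ j' ∈ R, v j' ≤ v j
  have hmemF : ∀ {r}, r ∈ F ↔ r ∈ R ∧ ∀ j' ∈ R, v j' ≤ v r := Finset.mem_filter
  constructor
  · intro h
    unfold favorite at h
    split_ifs at h with hF
    obtain rfl := Option.some_inj.1 h
    obtain ⟨hjR, hjmax⟩ := hmemF.1 (F.min'_mem hF)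
    refine ⟨hjR, fun r hr => ⟨hjmax r hr, fun hrj => F.min'_le r (hmemF.2 ⟨hr, ?_⟩)⟩⟩
    exact fun j' hj' => hrj ▸ hjmax j' hj'
  · rintro ⟨hjR, hd⟩
    have hjF : j ∈ F := hmemF.2 ⟨hjR, fun r hr => (hd r hr).1⟩
    rw [favorite, dif_pos ⟨j, hjF⟩, Option.some_inj]
    obtain ⟨hrR, hrmax⟩ := hmemF.1 (F.min'_mem ⟨j, hjF⟩)
    exact le_antisymm (F.min'_le j hjF)
      ((hd _ hrR).2 (le_antisymm (hd _ hrR).1 (hrmax j hjR)))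

theorem exists_favorite_eq_some (v : Fin m → ℝ) {R : Finset (Fin m)} (hR : R.Nonempty) :
    ∃ j, favorite v R = some j := by
  obtain ⟨j, hjR, hjmax⟩ := R.exists_max_image v hR
  rw [favorite, dif_pos ⟨j, Finset.mem_filter.2 ⟨hjR, hjmax⟩⟩]
  exact ⟨_, rfl⟩

theorem favorite_empty (v : Fin m → ℝ) : favorite v ∅ = none := by
  simp [favorite]

end Favorite

abbrev PickState (n m : ℕ) := Finset (Fin m) × (Fin n → Finset (Fin m))

noncomputable def bundleValue {n m : ℕ} (u : Fin n → Fin m → ℝ) (i : Fin n)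
    (st : PickState n m) : ℝ :=
  ∑ x ∈ st.2 i, u i x

section PickStep

variable {n m : ℕ} {u : Fin n → Fin m → ℝ} {st : PickState n m} {a i : Fin n}

theorem pickStep_of_favorite_eq_none (h : favorite (u a) st.1 = none) : pickStep u st a = st := by
  rw [pickStep, h]

theorem pickStep_of_favorite_eq_some {j : Fin m} (h : favorite (u a) st.1 = some j) :
    pickStep u st a = (st.1.erase j, Function.update st.2 a (insert j (st.2 a))) := by
  rw [pickStep, h]

theorem pickStep_fst_of_favorite_eq_some {j : Fin m} (h : favorite (u a) st.1 = some j) :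
    (pickStep u st a).1 = st.1.erase j := by
  rw [pickStep_of_favorite_eq_some h]

theorem disjoint_pickStep (hd : Disjoint st.1 (st.2 i)) (a : Fin n) :
    Disjoint (pickStep u st a).1 ((pickStep u st a).2 i) := by
  cases hf : favorite (u a) st.1 with
  | none => rwa [pickStep_of_favorite_eq_none hf]
  | some j =>
    rw [pickStep_of_favorite_eq_some hf]
    rcases eq_or_ne i a with rfl | hia
    · simpa [Function.update_self] using hd.mono_left (Finset.erase_subset j st.1)
    · simpa [Function.update_of_ne hia] using hd.mono_left (Finset.erase_subset j st.1)

theorem bundleValue_pickStep_self {j : Fin m} (hd : Disjoint st.1 (st.2 i))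
    (h : favorite (u i) st.1 = some j) :
    bundleValue u i (pickStep u st i) = bundleValue u i st + u i j := by
  have hj : j ∉ st.2 i := Finset.disjoint_left.1 hd (favorite_eq_some_iff.1 h).1
  simp only [pickStep_of_favorite_eq_some h, bundleValue, Function.update_self,
    Finset.sum_insert hj, add_comm]

theorem bundleValue_pickStep_of_ne (hai : a ≠ i) :
    bundleValue u i (pickStep u st a) = bundleValue u i st := by
  cases hf : favorite (u a) st.1 with
  | none => rw [pickStep_of_favorite_eq_none hf]
  | some j => simp only [pickStep_of_favorite_eq_some hf, bundleValue,
      Function.update_of_ne hai.symm]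

theorem bundleValue_le_pickStep (hu : ∀ j, 0 ≤ u i j) (hd : Disjoint st.1 (st.2 i))
    (a : Fin n) : bundleValue u i st ≤ bundleValue u i (pickStep u st a) := by
  rcases eq_or_ne a i with rfl | hai
  · cases hf : favorite (u a) st.1 with
    | none => rw [pickStep_of_favorite_eq_none hf]
    | some j => linarith [bundleValue_pickStep_self hd hf, hu j]
  · rw [bundleValue_pickStep_of_ne hai]

theorem bundleValue_le_foldl_pickStep (hu : ∀ j, 0 ≤ u i j) (hd : Disjoint st.1 (st.2 i))
    (l : List (Fin n)) : bundleValue u i st ≤ bundleValue u i (l.foldl (pickStep u) st) := by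
  induction l generalizing st with
  | nil => exact le_rfl
  | cons a l ih =>
    exact (bundleValue_le_pickStep hu hd a).trans (ih (disjoint_pickStep hd a))

theorem bundleValue_foldl_pickStep_of_not_mem {l : List (Fin n)} (hl : i ∉ l) :
    bundleValue u i (l.foldl (pickStep u) st) = bundleValue u i st := by
  induction l generalizing st with
  | nil => rfl
  | cons a l ih =>
    rw [List.mem_cons, not_or] at hl
    rw [List.foldl_cons, ih hl.2, bundleValue_pickStep_of_ne (Ne.symm hl.1)]

end PickStep

section Coupling

variable {m : ℕ} {u : Fin 2 → Fin m → ℝ}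

def ExchangedPools (u : Fin 2 → Fin m → ℝ) (R R' : Finset (Fin m)) : Prop :=
  R = R' ∨ ∃ T x y, x ∈ T ∧ y ∈ T ∧ Dominates (u 0) x T ∧ Dominates (u 1) y T ∧
    R = T.erase x ∧ R' = T.erase y

theorem ExchangedPools.card_eq {R R' : Finset (Fin m)} (h : ExchangedPools u R R') :
    R.card = R'.card := by
  obtain rfl | ⟨T, x, y, hx, hy, -, -, rfl, rfl⟩ := h
  · rfl
  · rw [Finset.card_erase_of_mem hx, Finset.card_erase_of_mem hy]

theorem ExchangedPools.erase_favorite_zero {R R' : Finset (Fin m)} {x x' : Fin m}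
    (h : ExchangedPools u R R') (hx : favorite (u 0) R = some x)
    (hx' : favorite (u 0) R' = some x') :
    u 0 x ≤ u 0 x' ∧ ExchangedPools u (R.erase x) (R'.erase x') := by
  by_cases hRR : R = R'
  · subst hRR
    obtain rfl := Option.some_inj.1 (hx.symm.trans hx')
    exact ⟨le_rfl, Or.inl rfl⟩
  obtain ⟨T, x₀, y, hx₀, hy, hx₀T, hyT, rfl, rfl⟩ := h.resolve_left hRR
  have hx₀y : x₀ ≠ y := by rintro rfl; exact hRR rfl
  obtain ⟨hxR, hxR'⟩ := favorite_eq_some_iff.1 hx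
  obtain rfl : x' = x₀ := Option.some_inj.1 <| hx'.symm.trans <|
    favorite_eq_some_iff.2
      ⟨Finset.mem_erase.2 ⟨hx₀y, hx₀⟩, hx₀T.mono (Finset.erase_subset y T)⟩
  refine ⟨(hx₀T x (Finset.mem_of_mem_erase hxR)).1, Or.inr ⟨T.erase x', x, y, hxR,
    Finset.mem_erase.2 ⟨hx₀y.symm, hy⟩, hxR', hyT.mono (Finset.erase_subset x' T), rfl,
    Finset.erase_right_comm⟩⟩

theorem ExchangedPools.erase_favorite_one {R R' : Finset (Fin m)} {y y' : Fin m}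
    (h : ExchangedPools u R R') (hy : favorite (u 1) R = some y)
    (hy' : favorite (u 1) R' = some y') :
    ExchangedPools u (R.erase y) (R'.erase y') := by
  by_cases hRR : R = R'
  · subst hRR
    obtain rfl := Option.some_inj.1 (hy.symm.trans hy')
    exact Or.inl rfl
  obtain ⟨T, x, y₀, hx, hy₀, hxT, hy₀T, rfl, rfl⟩ := h.resolve_left hRR
  have hxy₀ : x ≠ y₀ := by rintro rfl; exact hRR rfl
  obtain ⟨hy'R', hy'T⟩ := favorite_eq_some_iff.1 hy'
  obtain rfl : y = y₀ := Option.some_inj.1 <| hy.symm.trans <|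
    favorite_eq_some_iff.2
      ⟨Finset.mem_erase.2 ⟨hxy₀.symm, hy₀⟩, hy₀T.mono (Finset.erase_subset x T)⟩
  exact Or.inr ⟨T.erase y, x, y', Finset.mem_erase.2 ⟨hxy₀, hx⟩, hy'R',
    hxT.mono (Finset.erase_subset y T), hy'T, Finset.erase_right_comm, rfl⟩

structure Coupled (u : Fin 2 → Fin m → ℝ) (st st' : PickState 2 m) : Prop where
  disjoint : Disjoint st.1 (st.2 0)
  disjoint' : Disjoint st'.1 (st'.2 0)
  bundleValue_le : bundleValue u 0 st ≤ bundleValue u 0 st'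
  pools : ExchangedPools u st.1 st'.1

theorem Coupled.step {st st' : PickState 2 m} (hc : Coupled u st st') (a : Fin 2) :
    Coupled u (pickStep u st a) (pickStep u st' a) := by
  obtain ⟨hd, hd', hv, hpools⟩ := hc
  rcases Finset.eq_empty_or_nonempty st.1 with hR | hR
  · have hR' : st'.1 = ∅ := Finset.card_eq_zero.1 (hpools.card_eq ▸ Finset.card_eq_zero.2 hR)
    rw [pickStep_of_favorite_eq_none (hR ▸ favorite_empty _),
      pickStep_of_favorite_eq_none (hR' ▸ favorite_empty _)]
    exact ⟨hd, hd', hv, hpools⟩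
  have hR' : st'.1.Nonempty := Finset.card_pos.1 (hpools.card_eq ▸ Finset.card_pos.2 hR)
  obtain ⟨x, hx⟩ := exists_favorite_eq_some (u a) hR
  obtain ⟨x', hx'⟩ := exists_favorite_eq_some (u a) hR'
  obtain rfl | rfl : a = 0 ∨ a = 1 := by omega
  · obtain ⟨hle, hpools'⟩ := hpools.erase_favorite_zero hx hx'
    refine ⟨disjoint_pickStep hd 0, disjoint_pickStep hd' 0, ?_, ?_⟩
    · rw [bundleValue_pickStep_self hd hx, bundleValue_pickStep_self hd' hx']
      linarith
    · rwa [pickStep_fst_of_favorite_eq_some hx, pickStep_fst_of_favorite_eq_some hx']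
  · refine ⟨disjoint_pickStep hd 1, disjoint_pickStep hd' 1, ?_, ?_⟩
    · rwa [bundleValue_pickStep_of_ne one_ne_zero, bundleValue_pickStep_of_ne one_ne_zero]
    · rw [pickStep_fst_of_favorite_eq_some hx, pickStep_fst_of_favorite_eq_some hx']
      exact hpools.erase_favorite_one hx hx'

theorem Coupled.foldl {st st' : PickState 2 m} (hc : Coupled u st st')
    (l : List (Fin 2)) : Coupled u (l.foldl (pickStep u) st) (l.foldl (pickStep u) st') := by
  induction l generalizing st st' with
  | nil => exact hc
  | cons a l ih => exact ih (hc.step a)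

theorem coupled_pickStep_zero_pickStep_one {st st' : PickState 2 m}
    (hd : Disjoint st.1 (st.2 0)) (hd' : Disjoint st'.1 (st'.2 0)) (hpool : st.1 = st'.1)
    (hv : bundleValue u 0 st ≤ bundleValue u 0 st')
    (hv' : ∀ x ∈ st.1, bundleValue u 0 st + u 0 x ≤ bundleValue u 0 st') :
    Coupled u (pickStep u st 0) (pickStep u st' 1) := by
  rcases Finset.eq_empty_or_nonempty st.1 with hR | hR
  · rw [pickStep_of_favorite_eq_none (hR ▸ favorite_empty _),
      pickStep_of_favorite_eq_none (hpool ▸ hR ▸ favorite_empty _)]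
    exact ⟨hd, hd', hv, Or.inl hpool⟩
  obtain ⟨x, hx⟩ := exists_favorite_eq_some (u 0) hR
  obtain ⟨y, hy⟩ := exists_favorite_eq_some (u 1) (hpool ▸ hR)
  obtain ⟨hxR, hxT⟩ := favorite_eq_some_iff.1 hx
  obtain ⟨hyR, hyT⟩ := favorite_eq_some_iff.1 hy
  refine ⟨disjoint_pickStep hd 0, disjoint_pickStep hd' 1, ?_, Or.inr ⟨st.1, x, y, hxR,
    hpool ▸ hyR, hxT, hpool ▸ hyT, pickStep_fst_of_favorite_eq_some hx, ?_⟩⟩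
  · rw [bundleValue_pickStep_self hd hx, bundleValue_pickStep_of_ne one_ne_zero]
    exact hv' x hxR
  · rw [pickStep_fst_of_favorite_eq_some hy, hpool]

theorem coupled_swap (hu : ∀ j, 0 ≤ u 0 j) {st : PickState 2 m}
    (hd : Disjoint st.1 (st.2 0)) :
    Coupled u (pickStep u (pickStep u st 1) 0) (pickStep u (pickStep u st 0) 1) := by
  rcases Finset.eq_empty_or_nonempty st.1 with hR | hR
  · simp only [pickStep_of_favorite_eq_none (hR ▸ favorite_empty _)]
    exact ⟨hd, hd, le_rfl, Or.inl rfl⟩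
  obtain ⟨z₀, hz₀⟩ := exists_favorite_eq_some (u 0) hR
  obtain ⟨z₁, hz₁⟩ := exists_favorite_eq_some (u 1) hR
  obtain ⟨hz₀R, hz₀T⟩ := favorite_eq_some_iff.1 hz₀
  obtain ⟨hz₁R, hz₁T⟩ := favorite_eq_some_iff.1 hz₁
  have hv₀ := bundleValue_pickStep_self hd hz₀
  have hv₁ : bundleValue u 0 (pickStep u st 1) = bundleValue u 0 st :=
    bundleValue_pickStep_of_ne one_ne_zero
  by_cases hz : z₀ = z₁
  -- A common favorite: only the second run gives it to agent `0`, then both share the pool.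
  · subst hz
    refine coupled_pickStep_zero_pickStep_one (disjoint_pickStep hd 1) (disjoint_pickStep hd 0)
      (by rw [pickStep_fst_of_favorite_eq_some hz₀, pickStep_fst_of_favorite_eq_some hz₁])
      (by linarith [hu z₀]) fun x hx => ?_
    rw [pickStep_fst_of_favorite_eq_some hz₁] at hx
    linarith [(hz₀T x (Finset.mem_of_mem_erase hx)).1]
  -- Distinct favorites: both orders lead to the same state.
  have hz₀' : favorite (u 0) (pickStep u st 1).1 = some z₀ := by
    rw [pickStep_fst_of_favorite_eq_some hz₁, favorite_eq_some_iff]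
    exact ⟨Finset.mem_erase.2 ⟨hz, hz₀R⟩, hz₀T.mono (Finset.erase_subset _ _)⟩
  have hz₁' : favorite (u 1) (pickStep u st 0).1 = some z₁ := by
    rw [pickStep_fst_of_favorite_eq_some hz₀, favorite_eq_some_iff]
    exact ⟨Finset.mem_erase.2 ⟨Ne.symm hz, hz₁R⟩, hz₁T.mono (Finset.erase_subset _ _)⟩
  refine ⟨disjoint_pickStep (disjoint_pickStep hd 1) 0,
    disjoint_pickStep (disjoint_pickStep hd 0) 1, ?_, Or.inl ?_⟩
  · rw [bundleValue_pickStep_self (disjoint_pickStep hd 1) hz₀',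
      hv₁, bundleValue_pickStep_of_ne one_ne_zero, hv₀]
  · rw [pickStep_fst_of_favorite_eq_some hz₀', pickStep_fst_of_favorite_eq_some hz₁',
      pickStep_fst_of_favorite_eq_some hz₀, pickStep_fst_of_favorite_eq_some hz₁,
      Finset.erase_right_comm]

end Coupling

section Domination

variable {α : Type*} [DecidableEq α]

theorem count_take_le_of_cons {a b : α} {l l' : List α}
    (h : ∀ k, ((b :: l).take k).count a ≤ ((b :: l').take k).count a) (k : ℕ) :
    (l.take k).count a ≤ (l'.take k).count a := by
  simpa [List.count_cons] using h (k + 1)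

theorem count_take_le_of_append_cons {a : α} {s rest l : List α} (ha : a ∉ s)
    (h : ∀ k, ((s ++ a :: rest).take k).count a ≤ ((a :: l).take k).count a) (k : ℕ) :
    ((s ++ rest).take k).count a ≤ (l.take k).count a := by
  rcases le_total k s.length with hk | hk
  · rw [List.take_append_of_le_length hk, List.count_eq_zero.2 fun hmem => ha
      (List.mem_of_mem_take hmem)]
    exact Nat.zero_le _
  · have := h (k + 1)
    rw [List.take_append, List.take_of_length_le (by omega), Nat.sub_add_comm hk] at this
    rw [List.take_append, List.take_of_length_le hk]
    simpa [List.count_append, List.count_cons, ← add_assoc] using this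

end Domination

section Monotonicity

variable {m : ℕ} {u : Fin 2 → Fin m → ℝ}

theorem bundleValue_foldl_swap_le (hu : ∀ j, 0 ≤ u 0 j) {st : PickState 2 m}
    (hd : Disjoint st.1 (st.2 0)) (l : List (Fin 2)) :
    bundleValue u 0 ((1 :: 0 :: l).foldl (pickStep u) st) ≤
      bundleValue u 0 ((0 :: 1 :: l).foldl (pickStep u) st) := by
  simpa only [List.foldl_cons] using ((coupled_swap hu hd).foldl l).bundleValue_le

theorem bundleValue_foldl_append_cons_zero_le (hu : ∀ j, 0 ≤ u 0 j) {st : PickState 2 m}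
    (hd : Disjoint st.1 (st.2 0)) (s l : List (Fin 2)) :
    bundleValue u 0 ((s ++ 0 :: l).foldl (pickStep u) st) ≤
      bundleValue u 0 ((0 :: s ++ l).foldl (pickStep u) st) := by
  induction s generalizing st with
  | nil => exact le_rfl
  | cons a s ih =>
    calc bundleValue u 0 ((s ++ 0 :: l).foldl (pickStep u) (pickStep u st a))
        ≤ bundleValue u 0 ((a :: 0 :: s ++ l).foldl (pickStep u) st) :=
          ih (disjoint_pickStep hd a)
      _ ≤ bundleValue u 0 ((0 :: a :: s ++ l).foldl (pickStep u) st) := by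
          obtain rfl | rfl : a = 0 ∨ a = 1 := by omega
          exacts [le_rfl, bundleValue_foldl_swap_le hu hd _]

theorem bundleValue_foldl_le_of_count_take_le (hu : ∀ j, 0 ≤ u 0 j) {π π' : List (Fin 2)}
    {st : PickState 2 m} (hd : Disjoint st.1 (st.2 0))
    (h : ∀ k, (π.take k).count 0 ≤ (π'.take k).count 0) :
    bundleValue u 0 (π.foldl (pickStep u) st) ≤ bundleValue u 0 (π'.foldl (pickStep u) st) := by
  induction π' generalizing π st with
  | nil =>
    have h0 : 0 ∉ π := List.count_eq_zero.1 <| by simpa using h π.length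
    rw [bundleValue_foldl_pickStep_of_not_mem h0]
    exact le_rfl
  | cons a' π' ih =>
    obtain rfl | rfl : a' = 0 ∨ a' = 1 := by omega
    · by_cases h0 : 0 ∈ π
      · obtain ⟨s, rest, rfl, hs⟩ := List.eq_append_cons_of_mem h0
        exact (bundleValue_foldl_append_cons_zero_le hu hd s rest).trans
          (ih (disjoint_pickStep hd 0) (count_take_le_of_append_cons hs h))
      · rw [bundleValue_foldl_pickStep_of_not_mem h0]
        exact bundleValue_le_foldl_pickStep hu hd _
    · match π, h with
      | [], _ => exact bundleValue_le_foldl_pickStep hu hd _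
      | b :: π, h =>
        obtain rfl : b = 1 := by
          have : b ≠ 0 := by simpa [List.count_cons] using h 1
          omega
        exact ih (disjoint_pickStep hd 1) (count_take_le_of_cons h)

end Monotonicity

section Quota

theorem count_zero_add_count_one (l : List (Fin 2)) : l.count 0 + l.count 1 = l.length := by
  induction l with
  | nil => rfl
  | cons a l ih =>
    simp only [List.count_cons, List.length_cons, beq_iff_eq]
    split_ifs <;> omega

variable {w w' : Fin 2 → ℝ} {π π' : List (Fin 2)}

theorem IsQuotaSeq.getElem_eq_zero_of_count_take_eq (hw : ∀ i, 0 < w i) (h0 : w 0 < w' 0)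
    (h1 : w' 1 = w 1) (hq : IsQuotaSeq w π) (hq' : IsQuotaSeq w' π') {k : ℕ}
    (hk : k < π.length) (hk' : k < π'.length)
    (hcount : (π.take k).count 0 = (π'.take k).count 0) (hπ : π[k] = 0) : π'[k] = 0 := by
  by_contra hπ'
  replace hπ' : π'[k] = 1 := by omega
  have hcount₁ : (π'.take k).count 1 = (π.take k).count 1 := by
    have hπlen := count_zero_add_count_one (π.take k)
    have hπ'len := count_zero_add_count_one (π'.take k)
    simp only [List.length_take] at hπlen hπ'len
    omega
  obtain ⟨hel, hmin⟩ := hq k hk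
  obtain ⟨hel', hmin'⟩ := hq' k hk'
  simp only [List.get_eq_getElem, hπ, hπ', Fin.sum_univ_two, h1, hcount, hcount₁]
    at hel hmin hel' hmin'
  set a : ℝ := (((π'.take k).count 0 : ℕ) : ℝ)
  set b : ℝ := (((π.take k).count 1 : ℕ) : ℝ)
  have hw0 := hw 0
  have hw1 := hw 1
  have hk1 : (0 : ℝ) < k + 1 := by positivity
  -- Raising `w 0` lowers agent `1`'s quota, so agent `1` was eligible under `w` as well ...
  have hel₁ : b < w 1 * (k + 1) / (w 0 + w 1) := hel'.trans <|
    div_lt_div_of_pos_left (by positivity) (by positivity) (by linarith)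
  -- ... and raises agent `0`'s quota, so agent `0` stays eligible under `w'`.
  have hel₀ : a < w' 0 * (k + 1) / (w' 0 + w 1) := by
    refine hel.trans_le ?_
    rw [div_le_div_iff₀ (by positivity) (by linarith)]
    nlinarith [mul_nonneg (mul_nonneg hk1.le hw1.le) (sub_nonneg.2 h0.le)]
  have hle := (hmin 1 hel₁).1
  have hlt := (hmin' 0 hel₀).2 Fin.zero_lt_one
  have : (a + 1) / w' 0 < (a + 1) / w 0 :=
    div_lt_div_of_pos_left (by positivity) hw0 h0
  linarith

theorem IsQuotaSeq.count_take_le (hw : ∀ i, 0 < w i) (h0 : w 0 < w' 0) (h1 : w' 1 = w 1)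
    (hq : IsQuotaSeq w π) (hq' : IsQuotaSeq w' π') (hlen : π.length = π'.length) (k : ℕ) :
    (π.take k).count 0 ≤ (π'.take k).count 0 := by
  induction k with
  | zero => simp
  | succ k ih =>
    rw [List.take_add_one, List.take_add_one, List.count_append, List.count_append]
    by_cases hzero : ∃ hk : k < π.length, π[k] = 0
    · obtain ⟨hk, hπk⟩ := hzero
      have hk' : k < π'.length := hlen ▸ hk
      rcases ih.lt_or_eq with hlt | heq
      · have : (π[k]?.toList).count 0 ≤ 1 := by simp [List.getElem?_eq_getElem hk, hπk]
        omega
      · have hπ'k := hq.getElem_eq_zero_of_count_take_eq hw h0 h1 hq' hk hk' heq hπk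
        simp [List.getElem?_eq_getElem hk, List.getElem?_eq_getElem hk', hπk, hπ'k, heq]
    · have : (π[k]?.toList).count 0 = 0 := by
        rcases hπk : π[k]? with _ | b
        · rfl
        · obtain ⟨hk, rfl⟩ := List.getElem?_eq_some_iff.1 hπk
          simpa [List.count_singleton] using fun h => hzero ⟨hk, h⟩
      omega

end Quota

/-- For two agents (agent 1 is `0`, agent 2 is `1`), the quota method
satisfies weight-consistency and weight-monotonicity: if agent 1's weight increases
from `w 0` to `w' 0` (agent 2's weight unchanged), then the quota picking sequence
for `w'` can be obtained from the one for `w` by moving some of agent 1's picks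
earlier, inserting occurrences of agent 1, and trimming the suffix to length `m`
(equivalently, for two agents: every prefix of the new sequence contains at least as
many picks of agent 1 as the corresponding prefix of the old one); consequently, for
any additive utilities, agent 1's utility does not decrease. -/
theorem quota_two_agents_weight_consistent_and_monotone
    (m : ℕ) (w w' : Fin 2 → ℝ) (hw : ∀ i, 0 < w i)
    (h0 : w 0 < w' 0) (h1 : w' 1 = w 1)
    (π π' : List (Fin 2)) (hlen : π.length = m) (hlen' : π'.length = m)
    (hq : IsQuotaSeq w π) (hq' : IsQuotaSeq w' π') :
    (∀ k : ℕ, (π.take k).count 0 ≤ (π'.take k).count 0) ∧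
    (∀ u : Fin 2 → Fin m → ℝ, (∀ i j, 0 ≤ u i j) →
      (∑ x ∈ allocate u π 0, u 0 x) ≤ ∑ x ∈ allocate u π' 0, u 0 x) := by
  have hcount := IsQuotaSeq.count_take_le hw h0 h1 hq hq' (hlen.trans hlen'.symm)
  refine ⟨hcount, fun u hu => ?_⟩
  exact bundleValue_foldl_le_of_count_take_le (hu 0) (Finset.disjoint_empty_right _) hcount
end
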